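/- arXiv:1910.02326 — 2 statements merged into one kernel-verified Lean document; each statement's English description precedes it below -/
import Mathlib

section
/- Pairwise coprimality of distinct root binomials (supporting claim ensuring the hypotheses of the uniqueness lemma hold for the positive roots Δ⁺): if d, d′ ∈ ℕ^N are nonzero and not proportional (i.e. d′ ≠ q·d for every rational number q), then every common divisor of b_d = 1 − X^d and b_{d′} = 1 − X^{d′} in ℤ[x₁,…,x_N] is a unit. (Distinct positive roots of a reduced root system are never proportional, so the binomials 1 − e^{−β}, β ∈ Δ⁺, are pairwise coprime.) -/
/-!
Choose a weight `w` with `⟨w, d⟩ > 0 > ⟨w, d'⟩`; it exists because some `2 × 2` minor of `(d, d')`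
is nonzero. Order monomials by `w`-weight, breaking ties lexicographically. This is a total order
compatible with addition, so leading (and trailing) monomials of a product are the sums of those of
the factors. In `1 - X^{d'}` the monomial `1` is leading, so every divisor has leading monomial `1`;
in `1 - X^d` it is trailing, so every divisor has trailing monomial `1`. A common divisor is
therefore a constant, and this constant divides the constant term `1`.
-/

open MvPolynomial

/-- The binomial `b_d = 1 - X^d` in `ℤ[x₁,…,x_N]`. -/
noncomputable def bd {N : ℕ} (d : Fin N → ℕ) : MvPolynomial (Fin N) ℤ :=
  1 - ∏ i, X i ^ d i

open Matrix OrderDual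

theorem exists_mul_ne_mul_of_forall_ne_const_mul {ι K : Type*} [Field K] {d d' : ι → K}
    (hd : d ≠ 0) (h : ∀ q : K, d' ≠ fun i => q * d i) : ∃ i j, d i * d' j ≠ d j * d' i := by
  by_contra! hminors
  obtain ⟨i, hi⟩ : ∃ i, d i ≠ 0 := Function.ne_iff.1 hd
  refine h (d' i / d i) (funext fun j => ?_)
  field_simp
  linear_combination hminors i j

theorem exists_dotProduct_pos_neg {ι K : Type*} [Fintype ι] [CommRing K] [LinearOrder K]
    [IsStrictOrderedRing K] {d d' : ι → K} {i j : ι} (h : d i * d' j ≠ d j * d' i) :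
    ∃ w : ι → K, 0 < d ⬝ᵥ w ∧ d' ⬝ᵥ w < 0 := by
  classical
  -- `w = (d j + d' j) eᵢ - (d i + d' i) eⱼ` has `d ⬝ᵥ w = -(d' ⬝ᵥ w) = d i * d' j - d j * d' i`
  have key : ∀ i j, 0 < d i * d' j - d j * d' i → ∃ w : ι → K, 0 < d ⬝ᵥ w ∧ d' ⬝ᵥ w < 0 := by
    intro i j hpos
    refine ⟨Pi.single i (d j + d' j) - Pi.single j (d i + d' i), ?_, ?_⟩ <;>
      simp only [dotProduct_sub, dotProduct_single] <;> linarith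
  rcases (sub_ne_zero.2 h).lt_or_gt with hneg | hpos
  · exact key j i (by linarith)
  · exact key i j hpos

namespace Finsupp

variable {σ M : Type*} [AddCommMonoid M]

noncomputable def weightLex (w : σ → M) (m : σ →₀ ℕ) : M ×ₗ Lex (σ →₀ ℕ) :=
  toLex (weight w m, toLex m)

theorem weightLex_injective (w : σ → M) : (weightLex w).Injective := fun _ _ h =>
  toLex_inj.1 (Prod.ext_iff.1 (toLex_inj.1 h)).2

theorem weightLex_add (w : σ → M) (m m' : σ →₀ ℕ) :
    weightLex w (m + m') = weightLex w m + weightLex w m' := by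
  simp only [weightLex, map_add]
  rfl

theorem weightLex_lt_weightLex [LinearOrder σ] [LinearOrder M] {w : σ → M} {m m' : σ →₀ ℕ}
    (h : weight w m < weight w m') : weightLex w m < weightLex w m' :=
  Prod.Lex.toLex_lt_toLex.2 (Or.inl h)

theorem weight_equivFunOnFinite_symm [Fintype σ] {K : Type*} [CommSemiring K] (w : σ → K)
    (d : σ → ℕ) : weight w (equivFunOnFinite.symm d) = (fun i => (d i : K)) ⬝ᵥ w := by
  simp [weight_eq_sum, dotProduct, nsmul_eq_mul]

end Finsupp

namespace MvPolynomial

variable {σ R B : Type*} [LinearOrder B] {D : (σ →₀ ℕ) → B}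

section Binomial

variable [CommRing R] {e : σ →₀ ℕ}

theorem coeff_zero_one_sub_monomial (he : e ≠ 0) :
    coeff 0 (1 - monomial e 1 : MvPolynomial σ R) = 1 := by
  classical
  rw [coeff_sub, coeff_zero_one, coeff_monomial, if_neg he, sub_zero]

theorem zero_mem_support_one_sub_monomial [Nontrivial R] (he : e ≠ 0) :
    0 ∈ (1 - monomial e 1 : MvPolynomial σ R).support := by
  rw [mem_support_iff, coeff_zero_one_sub_monomial he]
  exact one_ne_zero

theorem isMaxOn_support_one_sub_monomial (he : D e < D 0) :
    IsMaxOn D (1 - monomial e 1 : MvPolynomial σ R).support 0 := by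
  classical
  intro m hm
  obtain hm | hm := Finset.mem_union.1 (support_sub σ (monomial 0 1) _ hm)
  · obtain rfl := Finset.mem_singleton.1 (support_monomial_subset hm)
    exact le_rfl
  · obtain rfl := Finset.mem_singleton.1 (support_monomial_subset hm)
    exact he.le

end Binomial

variable [AddCommMonoid B] [IsOrderedCancelAddMonoid B]

section CommSemiring

variable [CommSemiring R] {p q : MvPolynomial σ R} {a c : σ →₀ ℕ}

theorem coeff_mul_add_of_isMaxOn (hD : D.Injective) (hadd : ∀ a b, D (a + b) = D a + D b)
    (ha : IsMaxOn D p.support a) (hc : IsMaxOn D q.support c) :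
    coeff (a + c) (p * q) = coeff a p * coeff c q := by
  refine AddMonoidAlgebra.coeff_mul_add_of_uniqueAdd fun x y hx hy hxy => ?_
  have := (add_eq_add_iff_eq_and_eq (ha hx) (hc hy)).1 (by rw [← hadd, ← hadd, hxy])
  exact ⟨hD this.1, hD this.2⟩

theorem isMaxOn_support_mul (hadd : ∀ a b, D (a + b) = D a + D b)
    (ha : IsMaxOn D p.support a) (hc : IsMaxOn D q.support c) :
    IsMaxOn D (p * q).support (a + c) := by
  classical
  intro m hm
  obtain ⟨x, hx, y, hy, rfl⟩ := Finset.mem_add.1 (support_mul p q hm)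
  show D (x + y) ≤ D (a + c)
  rw [hadd, hadd]
  exact add_le_add (ha hx) (hc hy)

theorem isMaxOn_support_zero_of_dvd [NoZeroDivisors R] (hD : D.Injective)
    (hadd : ∀ a b, D (a + b) = D a + D b) {f : MvPolynomial σ R} (hpf : p ∣ f)
    (hf₀ : 0 ∈ f.support) (hf : IsMaxOn D f.support 0) : IsMaxOn D p.support 0 := by
  obtain ⟨q, rfl⟩ := hpf
  have hpq : p * q ≠ 0 := ne_zero_iff.2 ⟨0, mem_support_iff.1 hf₀⟩
  obtain ⟨a, ha, hamax⟩ :=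
    p.support.exists_max_image D (support_nonempty.2 (left_ne_zero_of_mul hpq))
  obtain ⟨c, hc, hcmax⟩ :=
    q.support.exists_max_image D (support_nonempty.2 (right_ne_zero_of_mul hpq))
  replace hamax : IsMaxOn D p.support a := isMaxOn_iff.2 hamax
  replace hcmax : IsMaxOn D q.support c := isMaxOn_iff.2 hcmax
  have hac : a + c ∈ (p * q).support := by
    rw [mem_support_iff, coeff_mul_add_of_isMaxOn hD hadd hamax hcmax]
    exact mul_ne_zero (mem_support_iff.1 ha) (mem_support_iff.1 hc)
  have hac₀ : a + c = 0 := hD ((hf hac).antisymm (isMaxOn_support_mul hadd hamax hcmax hf₀))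
  rwa [(add_eq_zero.1 hac₀).1] at hamax

end CommSemiring

theorem isUnit_of_dvd_one_sub_monomial [CommRing R] [IsDomain R] {p : MvPolynomial σ R}
    {e e' : σ →₀ ℕ} (hD : D.Injective) (hadd : ∀ a b, D (a + b) = D a + D b)
    (he : D 0 < D e) (he' : D e' < D 0)
    (h : p ∣ 1 - monomial e 1) (h' : p ∣ 1 - monomial e' 1) : IsUnit p := by
  have hmax : IsMaxOn D p.support 0 :=
    isMaxOn_support_zero_of_dvd hD hadd h'
      (zero_mem_support_one_sub_monomial (ne_of_apply_ne D he'.ne))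
      (isMaxOn_support_one_sub_monomial he')
  have hmin : IsMinOn D p.support 0 :=
    isMaxOn_dual_iff.1 <| isMaxOn_support_zero_of_dvd (D := toDual ∘ D) hD hadd h
      (zero_mem_support_one_sub_monomial (ne_of_apply_ne D he.ne'))
      (isMaxOn_support_one_sub_monomial he)
  have hC : p = C (coeff 0 p) := by
    rw [← totalDegree_eq_zero_iff_eq_C, totalDegree_eq_zero_iff]
    intro m hm
    rw [hD ((hmax hm).antisymm (hmin hm))]
    simp
  rw [hC]
  refine (isUnit_of_dvd_one ?_).map C
  rw [← coeff_zero_one_sub_monomial (R := R) (ne_of_apply_ne D he.ne')]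
  simpa only [constantCoeff_eq] using map_dvd constantCoeff h

end MvPolynomial

theorem bd_eq_one_sub_monomial {N : ℕ} (d : Fin N → ℕ) :
    bd d = 1 - monomial (Finsupp.equivFunOnFinite.symm d) 1 := by
  rw [bd, monomial_eq, C_1, one_mul, Finsupp.prod_fintype _ _ fun i => pow_zero _]
  rfl

theorem distinct_root_binomials_coprime_general
    {N : ℕ} (d d' : Fin N → ℕ) (hd : d ≠ 0)
    (hprop : ∀ q : ℚ, (fun i => (d' i : ℚ)) ≠ fun i => q * (d i : ℚ)) :
    ∀ p : MvPolynomial (Fin N) ℤ, p ∣ bd d → p ∣ bd d' → IsUnit p := by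
  intro p hp hp'
  have hdℚ : (fun i => (d i : ℚ)) ≠ 0 := by simpa [funext_iff] using hd
  obtain ⟨i, j, hij⟩ := exists_mul_ne_mul_of_forall_ne_const_mul hdℚ hprop
  obtain ⟨w, hw, hw'⟩ := exists_dotProduct_pos_neg
    (d := fun i => (d i : ℚ)) (d' := fun i => (d' i : ℚ)) hij
  rw [bd_eq_one_sub_monomial] at hp hp'
  refine isUnit_of_dvd_one_sub_monomial (Finsupp.weightLex_injective w)
    (Finsupp.weightLex_add w) ?_ ?_ hp hp' <;>
    apply Finsupp.weightLex_lt_weightLex <;>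
    rwa [map_zero, Finsupp.weight_equivFunOnFinite_symm]

/-- if `d, d' ∈ ℕ^N` are nonzero and not proportional (i.e.
`d' ≠ q·d` for every rational `q`), then every common divisor of `b_d = 1 - X^d` and
`b_{d'} = 1 - X^{d'}` in `ℤ[x₁,…,x_N]` is a unit. -/
theorem distinct_root_binomials_coprime
    {N : ℕ} (d d' : Fin N → ℕ) (hd : d ≠ 0) (hd' : d' ≠ 0)
    (hprop : ∀ q : ℚ, (fun i => (d' i : ℚ)) ≠ fun i => q * (d i : ℚ)) :
    ∀ p : MvPolynomial (Fin N) ℤ, p ∣ bd d → p ∣ bd d' → IsUnit p :=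
  distinct_root_binomials_coprime_general d d' hd hprop
end

section
/- Irreducibility of primitive root binomials (supporting claim behind the squared-denominator argument of Lemma 4.5): if d ∈ ℕ^N is nonzero and the greatest common divisor of its coordinates is 1, then the polynomial 1 − X^d is irreducible in ℤ[x₁,…,x_N]. (Every positive root of a reduced root system is a primitive vector in the root lattice, so each binomial 1 − e^{−β}, β ∈ Δ⁺, is irreducible, hence prime, in the ring 𝒮.) -/
/-!
Pick `c ∈ ℤ^N` with `⟨c, d⟩ = 1` (Bézout) and substitute `xᵢ ↦ T^{cᵢ}` into the Laurent
polynomial ring `ℤ[T, T⁻¹]`; this sends `1 - X^d` to `1 - T`, which is irreducible there. So from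
a factorisation `1 - X^d = a * b`, one factor, say `a`, is mapped to a Laurent monomial. Choosing
`c` so that the weight `u ↦ ⟨c, u⟩` is injective on the exponents of `a` and `b` (possible because
the solutions of `⟨c, d⟩ = 1` form an affine lattice that no finite union of proper affine
hyperplanes covers), no cancellation occurs, so `a` has a single monomial; as `a` divides a
polynomial with constant term `1`, that monomial is a unit constant.
-/

open MvPolynomial

open Matrix
open LaurentPolynomial (T)
open scoped LaurentPolynomial

theorem Finset.natCast_gcd {ι : Type*} (s : Finset ι) (f : ι → ℕ) :
    ((s.gcd f : ℕ) : ℤ) = s.gcd fun i => (f i : ℤ) := by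
  classical
  induction s using Finset.induction_on with
  | empty => simp
  | insert a s _ ih =>
    rw [Finset.gcd_insert, Finset.gcd_insert, ← ih, ← Int.coe_gcd, Int.gcd_natCast_natCast]
    rfl

theorem exists_dotProduct_natCast_eq_one {σ : Type*} [Fintype σ] {d : σ → ℕ}
    (hd : Finset.univ.gcd d = 1) : ∃ c : σ → ℤ, c ⬝ᵥ (d ·) = 1 := by
  obtain ⟨c, hc⟩ := Finset.univ.gcd_eq_sum_mul fun i => (d i : ℤ)
  refine ⟨c, ?_⟩
  rw [dotProduct_comm, dotProduct, ← hc, ← Finset.natCast_gcd, hd, Nat.cast_one]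

theorem exists_forall_add_dotProduct_ne_zero {R σ ι : Type*} [CommRing R] [IsDomain R]
    [Infinite R] [Fintype σ] (s : Finset ι) (a : ι → R) (w : ι → σ → R)
    (h : ∀ i ∈ s, a i ≠ 0 ∨ w i ≠ 0) :
    ∃ x : σ → R, ∀ i ∈ s, a i + w i ⬝ᵥ x ≠ 0 := by
  classical
  let p : ι → MvPolynomial σ R := fun i => C (a i) + ∑ j, C (w i j) * X j
  have eval_p : ∀ i x, eval x (p i) = a i + w i ⬝ᵥ x := fun i x => by
    simp [p, dotProduct]
  have p_ne_zero : ∀ i ∈ s, p i ≠ 0 := by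
    intro i hi hp
    have ha : a i = 0 := by simpa [hp] using (eval_p i 0).symm
    have hw : w i = 0 := funext fun j => by
      simpa [hp, ha, dotProduct_single] using (eval_p i (Pi.single j 1)).symm
    exact (h i hi).elim (· ha) (· hw)
  obtain ⟨x, hx⟩ : ∃ x, eval x (∏ i ∈ s, p i) ≠ 0 := by
    by_contra! hzero
    exact Finset.prod_ne_zero_iff.mpr p_ne_zero (MvPolynomial.funext (by simpa using hzero))
  rw [map_prod, Finset.prod_ne_zero_iff] at hx
  exact ⟨x, fun i hi => eval_p i x ▸ hx i hi⟩

theorem exists_dotProduct_eq_one_forall_ne_zero {σ : Type*} [Fintype σ] {c₀ d : σ → ℤ}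
    (hc₀ : c₀ ⬝ᵥ d = 1) (D : Finset (σ → ℤ)) (hD : 0 ∉ D) :
    ∃ c : σ → ℤ, c ⬝ᵥ d = 1 ∧ ∀ δ ∈ D, c ⬝ᵥ δ ≠ 0 := by
  have hd : d ⬝ᵥ d ≠ 0 := by
    rw [ne_eq, dotProduct_self_eq_zero]
    rintro rfl
    simp at hc₀
  -- `c = c₀ + (d ⬝ᵥ d) • x - (x ⬝ᵥ d) • d` solves `c ⬝ᵥ d = 1` for every `x`, and `c ⬝ᵥ δ` is
  -- affine in `x`; it is identically zero only if `δ = 0`.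
  obtain ⟨x, hx⟩ := exists_forall_add_dotProduct_ne_zero D (c₀ ⬝ᵥ ·)
    (fun δ => (d ⬝ᵥ d) • δ - (d ⬝ᵥ δ) • d) fun δ hδ => by
      by_contra! h
      obtain ⟨h₁, h₂⟩ := h
      have : d ⬝ᵥ δ = 0 := by
        have := congrArg (c₀ ⬝ᵥ ·) h₂
        simp only [dotProduct_sub, dotProduct_smul, h₁, hc₀, smul_eq_mul, dotProduct_zero] at this
        linarith
      rw [this, zero_smul, sub_zero, smul_eq_zero] at h₂
      exact hD (h₂.resolve_left hd ▸ hδ)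
  refine ⟨c₀ + (d ⬝ᵥ d) • x - (x ⬝ᵥ d) • d, ?_, fun δ hδ => ?_⟩
  · simp only [add_dotProduct, sub_dotProduct, smul_dotProduct, smul_eq_mul, hc₀]
    ring
  · convert hx δ hδ using 1
    simp only [add_dotProduct, sub_dotProduct, smul_dotProduct, smul_eq_mul]
    rw [dotProduct_comm d x, dotProduct_comm δ x]
    ring

theorem exists_dotProduct_eq_one_injOn {σ : Type*} [Fintype σ] {c₀ d : σ → ℤ}
    (hc₀ : c₀ ⬝ᵥ d = 1) (S : Finset (σ →₀ ℕ)) :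
    ∃ c : σ → ℤ, c ⬝ᵥ d = 1 ∧ Set.InjOn (fun u : σ →₀ ℕ => c ⬝ᵥ (u ·)) S := by
  classical
  obtain ⟨c, hcd, hc⟩ := exists_dotProduct_eq_one_forall_ne_zero hc₀
    (S.offDiag.image fun p i => (p.1 i : ℤ) - p.2 i) (by
      simp only [Finset.mem_image, Finset.mem_offDiag, not_exists, not_and]
      rintro ⟨u, v⟩ ⟨-, -, huv⟩ h
      exact huv (Finsupp.ext fun i => by simpa [sub_eq_zero] using congrFun h i))
  refine ⟨c, hcd, fun u hu v hv huv => ?_⟩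
  by_contra hne
  refine hc _ (Finset.mem_image_of_mem _
    (Finset.mem_offDiag.mpr (⟨hu, hv, hne⟩ : (u, v).1 ∈ S ∧ _))) ?_
  rw [← sub_eq_zero, ← dotProduct_sub] at huv
  exact huv

namespace LaurentPolynomial

theorem T_sum {R ι : Type*} [CommSemiring R] (s : Finset ι) (g : ι → ℤ) :
    (T (∑ i ∈ s, g i) : R[T;T⁻¹]) = ∏ i ∈ s, T (g i) := by
  unfold T
  rw [AddMonoidAlgebra.prod_single, Finset.prod_const_one]

variable {R : Type*} [CommRing R] [IsDomain R]

theorem exists_eq_C_mul_T_of_dvd_X_pow {f : R[T;T⁻¹]} {n K : ℕ} {A : Polynomial R}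
    (hA : A.toLaurent = f * T n) (hdvd : A ∣ Polynomial.X ^ K) : ∃ r k, f = C r * T k := by
  obtain ⟨i, -, hi⟩ := (dvd_prime_pow Polynomial.prime_X K).mp hdvd
  obtain ⟨u, hu⟩ := hi.symm
  obtain ⟨r, -, hr⟩ := Polynomial.isUnit_iff.mp u.isUnit
  have hA' : A.toLaurent = C r * T i := by
    rw [← hu, ← hr, mul_comm, Polynomial.toLaurent_C_mul_X_pow]
  refine ⟨r, i - n, ?_⟩
  rw [T_sub, ← mul_assoc, ← hA', hA, mul_assoc, ← T_add, add_neg_cancel, T_zero, mul_one]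

theorem exists_eq_C_mul_T_of_mul_eq_one_sub_T {f g : R[T;T⁻¹]} (h : f * g = 1 - T 1) :
    (∃ r k, f = C r * T k) ∨ ∃ r k, g = C r * T k := by
  obtain ⟨n, A, hA⟩ := f.exists_T_pow
  obtain ⟨m, B, hB⟩ := g.exists_T_pow
  have hAB : A * B = (Polynomial.X - Polynomial.C 1) * -Polynomial.X ^ (n + m) := by
    apply Polynomial.toLaurent_injective
    rw [map_mul, map_mul, hA, hB, map_neg, map_sub, Polynomial.toLaurent_X,
      Polynomial.toLaurent_C, map_one, Polynomial.toLaurent_X_pow, Nat.cast_add, T_add]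
    linear_combination (T n * T m) * h
  have hprime := Polynomial.prime_X_sub_C (1 : R)
  rcases hprime.dvd_or_dvd (Dvd.intro _ hAB.symm) with ⟨A', rfl⟩ | ⟨B', rfl⟩
  · refine .inr (exists_eq_C_mul_T_of_dvd_X_pow (K := n + m) hB ⟨-A', ?_⟩)
    refine mul_left_cancel₀ hprime.ne_zero ?_
    linear_combination hAB
  · refine .inl (exists_eq_C_mul_T_of_dvd_X_pow (K := n + m) hA ⟨-B', ?_⟩)
    refine mul_left_cancel₀ hprime.ne_zero ?_
    linear_combination hAB

end LaurentPolynomial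

namespace MvPolynomial

variable {R σ : Type*} [CommSemiring R]

theorem isUnit_of_subsingleton_support [Nontrivial R] {f : MvPolynomial σ R}
    (hf : (f.support : Set (σ →₀ ℕ)).Subsingleton) (hunit : IsUnit (constantCoeff f)) :
    IsUnit f := by
  classical
  have h0 : (0 : σ →₀ ℕ) ∈ f.support := mem_support_iff.mpr hunit.ne_zero
  have : f = C (constantCoeff f) := by
    conv_lhs => rw [f.as_sum, Finset.eq_singleton_iff_unique_mem.mpr ⟨h0, fun u hu => hf hu h0⟩]
    rw [Finset.sum_singleton, C_apply, constantCoeff_eq]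
  exact this ▸ hunit.map C

variable [Fintype σ]

theorem aeval_T_monomial (c : σ → ℤ) (u : σ →₀ ℕ) (r : R) :
    aeval (fun i => (T (c i) : R[T;T⁻¹])) (monomial u r) =
      LaurentPolynomial.C r * T (c ⬝ᵥ (u ·)) := by
  rw [aeval_monomial, ← LaurentPolynomial.C_eq_algebraMap, Finsupp.prod_fintype _ _ (by simp),
    dotProduct, LaurentPolynomial.T_sum]
  simp only [LaurentPolynomial.T_pow, mul_comm]

theorem coeff_aeval_T_of_injOn {c : σ → ℤ} {f : MvPolynomial σ R}
    (hc : Set.InjOn (fun u : σ →₀ ℕ => c ⬝ᵥ (u ·)) f.support) {u : σ →₀ ℕ}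
    (hu : u ∈ f.support) :
    (aeval (fun i => (T (c i) : R[T;T⁻¹])) f).coeff (c ⬝ᵥ (u ·)) = coeff u f := by
  classical
  conv_lhs => rw [f.as_sum, map_sum]
  simp only [aeval_T_monomial, ← LaurentPolynomial.single_eq_C_mul_T, AddMonoidAlgebra.coeff_sum,
    Finsupp.finsetSum_apply, AddMonoidAlgebra.coeff_single, Finsupp.single_apply]
  rw [Finset.sum_eq_single_of_mem u hu fun v hv hvu => if_neg fun h => hvu (hc hv hu h), if_pos rfl]

theorem subsingleton_support_of_aeval_T_eq {c : σ → ℤ} {f : MvPolynomial σ R}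
    (hc : Set.InjOn (fun u : σ →₀ ℕ => c ⬝ᵥ (u ·)) f.support) {r : R} {k : ℤ}
    (hf : aeval (fun i => (T (c i) : R[T;T⁻¹])) f = LaurentPolynomial.C r * T k) :
    (f.support : Set (σ →₀ ℕ)).Subsingleton := by
  have weight_eq : ∀ u ∈ f.support, c ⬝ᵥ (u ·) = k := fun u hu => by
    by_contra hne
    have := coeff_aeval_T_of_injOn hc hu
    rw [hf, ← LaurentPolynomial.single_eq_C_mul_T, AddMonoidAlgebra.coeff_single,
      Finsupp.single_eq_of_ne hne] at this
    exact mem_support_iff.mp hu this.symm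
  exact fun u hu v hv => hc hu hv ((weight_eq u hu).trans (weight_eq v hv).symm)

end MvPolynomial

theorem constantCoeff_bd {N : ℕ} {d : Fin N → ℕ} (hd : d ≠ 0) : constantCoeff (bd d) = 1 := by
  obtain ⟨i, hi⟩ := Function.ne_iff.mp hd
  rw [bd, map_sub, map_one, map_prod, sub_eq_self]
  exact Finset.prod_eq_zero (Finset.mem_univ i) (by rw [map_pow, constantCoeff_X, zero_pow hi])

theorem not_isUnit_bd {N : ℕ} (d : Fin N → ℕ) : ¬IsUnit (bd d) := fun h => by
  simpa [bd] using h.map (eval fun _ => (1 : ℤ))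

theorem aeval_T_bd {N : ℕ} {c : Fin N → ℤ} {d : Fin N → ℕ} (h : c ⬝ᵥ (d ·) = 1) :
    aeval (fun i => (T (c i) : ℤ[T;T⁻¹])) (bd d) = 1 - T 1 := by
  simp only [bd, map_sub, map_one, map_prod, map_pow, aeval_X, LaurentPolynomial.T_pow,
    ← LaurentPolynomial.T_sum]
  rw [← h, dotProduct]
  simp only [mul_comm]

/-- if `d ∈ ℕ^N` is nonzero and the gcd of its coordinates is `1`,
then the binomial `1 - X^d` is irreducible in `ℤ[x₁,…,x_N]`. -/
theorem primitive_root_binomial_irreducible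
    {N : ℕ} (d : Fin N → ℕ) (hd : d ≠ 0)
    (hgcd : Finset.univ.gcd d = 1) :
    Irreducible (bd d) := by
  obtain ⟨c₀, hc₀⟩ := exists_dotProduct_natCast_eq_one hgcd
  refine ⟨not_isUnit_bd d, fun a b hab => ?_⟩
  obtain ⟨c, hcd, hc⟩ := exists_dotProduct_eq_one_injOn hc₀ (a.support ∪ b.support)
  have hφ : aeval (fun i => (T (c i) : ℤ[T;T⁻¹])) a * aeval (fun i => T (c i)) b = 1 - T 1 := by
    rw [← map_mul, ← hab, aeval_T_bd hcd]
  have hunit : IsUnit (constantCoeff a * constantCoeff b) := by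
    rw [← map_mul, ← hab, constantCoeff_bd hd]
    exact isUnit_one
  rcases LaurentPolynomial.exists_eq_C_mul_T_of_mul_eq_one_sub_T hφ with ⟨r, k, ha⟩ | ⟨r, k, hb⟩
  · refine .inl (isUnit_of_subsingleton_support ?_ (isUnit_of_mul_isUnit_left hunit))
    exact subsingleton_support_of_aeval_T_eq (hc.mono (by simp)) ha
  · refine .inr (isUnit_of_subsingleton_support ?_ (isUnit_of_mul_isUnit_right hunit))
    exact subsingleton_support_of_aeval_T_eq (hc.mono (by simp)) hb
end
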